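/- Let R be a commutative ring and suppose every module that is reg-injective (Ext^1_R(R/I, M) = 0 for all regular ideals I) is injective. If B is an R-module with Ext^1_R(B, T) = 0 for all torsion modules T, then Ext^2_R(B, N) = 0 for all R-modules N. -/

import Mathlib

open CategoryTheory

universe u

/-- `Ext^n_R(M, N)` via the derived functor `Ext` on `ModuleCat R`. -/
abbrev extGroup (R : Type u) [CommRing R] (n : ℕ) (M N : Type u)
    [AddCommGroup M] [Module R M] [AddCommGroup N] [Module R N] : Type u :=
  ((Ext R (ModuleCat.{u} R) n).obj (Opposite.op (ModuleCat.of R M))).obj (ModuleCat.of R N)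

section Bridge
open Limits

variable {R : Type u} [CommRing R]

lemma subsingleton_iff_of_iso {A B : ModuleCat.{u} R} (e : A ≅ B) :
    Subsingleton A ↔ Subsingleton B :=
  Equiv.subsingleton_congr ((forget (ModuleCat R)).mapIso e).toEquiv

lemma subsingleton_iff_isZero (A : ModuleCat.{u} R) : Subsingleton A ↔ IsZero A := by
  constructor
  · intro h; exact A.isZero_of_subsingleton
  · intro h
    refine ⟨fun a b => ?_⟩
    have h0 : (𝟙 A : A ⟶ A) = 0 := h.eq_of_src _ _
    have := fun z : A => congrArg (fun φ : A ⟶ A => φ z) h0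
    simpa using (this a).trans (this b).symm

lemma ext_subsingleton_iff {X Y : ModuleCat.{u} R} (P : ProjectiveResolution X) (n : ℕ) :
    Subsingleton (((Ext R (ModuleCat.{u} R) (n+1)).obj (Opposite.op X)).obj Y) ↔
      ∀ (f : P.complex.X (n+1) ⟶ Y), P.complex.d (n+2) (n+1) ≫ f = 0 →
        ∃ g : P.complex.X n ⟶ Y, P.complex.d (n+1) n ≫ g = f := by
  rw [subsingleton_iff_of_iso (P.isoExt (n+1) Y), subsingleton_iff_isZero,
    ← HomologicalComplex.exactAt_iff_isZero_homology,
    HomologicalComplex.exactAt_iff' _ n (n+1) (n+2) (by simp) (by simp),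
    ShortComplex.moduleCat_exact_iff]
  constructor
  · intro H f hf
    obtain ⟨g, hg⟩ := H f hf
    exact ⟨g, hg⟩
  · intro H f hf
    obtain ⟨g, hg⟩ := H f hf
    exact ⟨g, hg⟩

end Bridge

section MyRes
open Limits CategoryTheory.Projective

variable {C : Type*} [Category C] [Abelian C] [EnoughProjectives C]

namespace MyRes

variable {P Z : C} (e : P ⟶ Z) [Projective P] [Epi e]

/-- resolution complex starting from a given epi from a projective -/
noncomputable def ofComplex' : ChainComplex C ℕ :=
  ChainComplex.mk' P (syzygies e) (d e) (fun f => ⟨_, Projective.d f, (show Projective.d f ≫ f = 0 from (Category.assoc (Projective.π (kernel f)) (kernel.ι f) f).trans (by rw [kernel.condition]; exact comp_zero))⟩)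

omit [Projective P] [Epi e] in
lemma ofComplex'_d_1_0 : (ofComplex' e).d 1 0 = d e := by
  simp [ofComplex']

omit [Projective P] [Epi e] in
lemma ofComplex'_exactAt_succ (n : ℕ) : (ofComplex' e).ExactAt (n + 1) := by
  rw [HomologicalComplex.exactAt_iff' _ (n + 1 + 1) (n + 1) n (by simp) (by simp)]
  have h := exact_d_f (HomologicalComplex.d (ofComplex' e) (n + 1) n)
  unfold ofComplex' at h ⊢
  refine ShortComplex.exact_of_iso ?_ h
  refine ShortComplex.isoMk (ChainComplex.mk'XIso P (syzygies e) (d e) (fun f => ⟨_, Projective.d f,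
    (show Projective.d f ≫ f = 0 from (Category.assoc (Projective.π (kernel f)) (kernel.ι f) f).trans
      (by rw [kernel.condition]; exact comp_zero))⟩) n).symm (Iso.refl _) (Iso.refl _) ?_ ?_
  · erw [Category.comp_id]
    exact (Iso.inv_comp_eq _).2 (ChainComplex.mk'_d P (syzygies e) (d e) (fun f => ⟨_, Projective.d f,
      (show Projective.d f ≫ f = 0 from (Category.assoc (Projective.π (kernel f)) (kernel.ι f) f).trans
        (by rw [kernel.condition]; exact comp_zero))⟩) n)
  · exact (Category.id_comp _).trans (Category.comp_id _).symm

instance (n : ℕ) : Projective ((ofComplex' e).X n) := by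
  obtain (_ | _ | _ | n) := n
  · exact ‹Projective P›
  · apply Projective.projective_over
  · apply Projective.projective_over
  · apply Projective.projective_over

/-- a projective resolution starting from a given epi from a projective -/
noncomputable def res : ProjectiveResolution Z where
  complex := ofComplex' e
  π := (ChainComplex.toSingle₀Equiv _ _).symm ⟨e, by
          rw [ofComplex'_d_1_0]; exact (Category.assoc (Projective.π (kernel e)) (kernel.ι e) e).trans (by rw [kernel.condition]; exact comp_zero)⟩
  quasiIso := ⟨fun n => by
    cases n
    · rw [ChainComplex.quasiIsoAt₀_iff, ShortComplex.quasiIso_iff_of_zeros']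
      · refine (ShortComplex.exact_and_epi_g_iff_of_iso ?_).2
          ⟨exact_d_f e, by dsimp; infer_instance⟩
        exact ShortComplex.isoMk (Iso.refl _) (Iso.refl _) (Iso.refl _)
          (by exact (Category.id_comp (d e)).trans ((ofComplex'_d_1_0 e).symm.trans (Category.comp_id _).symm))
          (by
            erw [Category.id_comp, Category.comp_id]
            exact (ChainComplex.toSingle₀Equiv_symm_apply_f_zero (C := ofComplex' e) (X := Z) e _).symm)
      · rfl
      · rfl
      · rfl
    · rw [quasiIsoAt_iff_exactAt']
      · apply ofComplex'_exactAt_succ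
      · apply ChainComplex.exactAt_succ_single_obj⟩

end MyRes
end MyRes

section Baer
variable {R : Type u} [CommRing R]

open MyRes Limits in
lemma ext_subsingleton_one_of_baer (I : Ideal R) {M : Type u} [AddCommGroup M] [Module R M]
    (hM : ∀ f : I →ₗ[R] M, ∃ g : R →ₗ[R] M, ∀ (x : R) (hx : x ∈ I), g x = f ⟨x, hx⟩) :
    Subsingleton (extGroup R 1 (R ⧸ I) M) := by
  classical
  let e : ModuleCat.of R R ⟶ ModuleCat.of R (R ⧸ I) := ModuleCat.ofHom I.mkQ
  haveI : Epi e := (ModuleCat.epi_iff_surjective e).2 (Submodule.mkQ_surjective I)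
  haveI : Projective (ModuleCat.of R R) :=
    ModuleCat.projective_of_free (ι := PUnit.{u+1}) (Module.Basis.singleton PUnit.{u+1} R)
  let Q : ProjectiveResolution (ModuleCat.of R (R ⧸ I)) := res e
  rw [show (1 : ℕ) = 0 + 1 from rfl, ext_subsingleton_iff Q 0]
  intro f hf
  have hd : Q.complex.d 1 0 = Projective.d e := ofComplex'_d_1_0 e
  let δ : Q.complex.X 1 →ₗ[R] R := (Projective.d e : Projective.syzygies e ⟶ ModuleCat.of R R).hom
  have hrange : LinearMap.range δ = I := by
    ext a
    constructor
    · rintro ⟨x, rfl⟩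
      have h0 : Projective.d e ≫ e = 0 := (Category.assoc (Projective.π (kernel e)) (kernel.ι e) e).trans (by rw [kernel.condition]; exact comp_zero)
      have h1 := LinearMap.congr_fun (congrArg ModuleCat.Hom.hom h0) x
      exact (Submodule.Quotient.mk_eq_zero I).1 h1
    · intro ha
      have h0 : e a = 0 := (Submodule.Quotient.mk_eq_zero I).2 ha
      obtain ⟨y, hy⟩ := (ShortComplex.moduleCat_exact_iff _).1 (exact_d_f e) a h0
      exact ⟨y, hy⟩
  have hker : ∀ x, δ x = 0 → f x = 0 := by
    intro x hx
    have hx' : Q.complex.d 1 0 x = 0 := by rw [hd]; exact hx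
    obtain ⟨y, hy⟩ := (ShortComplex.moduleCat_exact_iff _).1 (Q.exact_succ 0) x hx'
    have h3 : f (Q.complex.d 2 1 y) = 0 := LinearMap.congr_fun (congrArg ModuleCat.Hom.hom hf) y
    rw [hy] at h3
    exact h3
  let F : (Q.complex.X 1 ⧸ LinearMap.ker δ) →ₗ[R] M :=
    Submodule.liftQ (LinearMap.ker δ) (f.hom : Q.complex.X 1 →ₗ[R] M) (fun x hx => hker x hx)
  let φ : I →ₗ[R] M :=
    F ∘ₗ ((LinearMap.quotKerEquivRange δ).symm.toLinearMap ∘ₗ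
      (LinearEquiv.ofEq I (LinearMap.range δ) hrange.symm).toLinearMap)
  obtain ⟨g, hg⟩ := hM φ
  refine ⟨(ModuleCat.ofHom g : ModuleCat.of R R ⟶ ModuleCat.of R M), ?_⟩
  apply ModuleCat.hom_ext
  apply LinearMap.ext
  intro x
  have hdx : Q.complex.d (0+1) 0 x = δ x := LinearMap.congr_fun (congrArg ModuleCat.Hom.hom hd) x
  show g (Q.complex.d (0+1) 0 x) = f x
  rw [hdx]
  have hmem : δ x ∈ I := (le_of_eq hrange) (LinearMap.mem_range_self δ x)
  show g (δ x) = f x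
  rw [hg (δ x) hmem]
  show F ((LinearMap.quotKerEquivRange δ).symm
    ((LinearEquiv.ofEq I (LinearMap.range δ) hrange.symm) ⟨δ x, hmem⟩)) = f x
  have h1 : (LinearEquiv.ofEq I (LinearMap.range δ) hrange.symm) ⟨δ x, hmem⟩
      = ⟨δ x, LinearMap.mem_range_self δ x⟩ := rfl
  have h2 : (LinearMap.quotKerEquivRange δ).symm ⟨δ x, LinearMap.mem_range_self δ x⟩
      = Submodule.Quotient.mk x := by
    apply (LinearMap.quotKerEquivRange δ).injective
    apply Subtype.ext
    simp [LinearMap.quotKerEquivRange_apply_mk]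
  rw [h1, h2]
  rfl

end Baer

section Helpers
variable {R : Type u} [CommRing R]

lemma quotKer_symm_mk {A B : Type u} [AddCommGroup A] [AddCommGroup B] [Module R A] [Module R B]
    (d : A →ₗ[R] B) (a : A) :
    (LinearMap.quotKerEquivRange d).symm ⟨d a, LinearMap.mem_range_self d a⟩
      = Submodule.Quotient.mk a := by
  apply (LinearMap.quotKerEquivRange d).injective
  apply Subtype.ext
  simp [LinearMap.quotKerEquivRange_apply_mk]

lemma factor_extend {A B M : Type u} [AddCommGroup A] [AddCommGroup B] [AddCommGroup M]
    [Module R A] [Module R B] [Module R M]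
    (dmap : A →ₗ[R] B) (f : A →ₗ[R] M)
    (hker : ∀ a, dmap a = 0 → f a = 0) (hinj : Module.Injective R M) :
    ∃ g : B →ₗ[R] M, ∀ a, g (dmap a) = f a := by
  let F := Submodule.liftQ (LinearMap.ker dmap) f (fun a ha => hker a ha)
  let φ : LinearMap.range dmap →ₗ[R] M :=
    F ∘ₗ (LinearMap.quotKerEquivRange dmap).symm.toLinearMap
  obtain ⟨g, hg⟩ := hinj.out (LinearMap.range dmap).subtype
    (Submodule.injective_subtype _) φ
  refine ⟨g, fun a => ?_⟩
  have h1 := hg ⟨dmap a, LinearMap.mem_range_self dmap a⟩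
  have h2 : g (dmap a) = φ ⟨dmap a, LinearMap.mem_range_self dmap a⟩ := h1
  rw [h2]
  show F ((LinearMap.quotKerEquivRange dmap).symm ⟨dmap a, LinearMap.mem_range_self dmap a⟩) = f a
  rw [quotKer_symm_mk]
  rfl

end Helpers

/-- Suppose every reg-injective `R`-module (one with `Ext^1_R(R/I, M) = 0` for all
regular ideals `I`) is injective. If `Ext^1_R(B, T) = 0` for all torsion `T`, then
`Ext^2_R(B, N) = 0` for all `N`. -/
theorem stmt18 (R : Type u) [CommRing R]
    (hreg : ∀ (M : Type u) [AddCommGroup M] [Module R M],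
      (∀ I : Ideal R, (∃ r ∈ I, r ∈ nonZeroDivisors R) →
        Subsingleton (extGroup R 1 (R ⧸ I) M)) → Module.Injective R M)
    (B : Type u) [AddCommGroup B] [Module R B]
    (hB : ∀ (T : Type u) [AddCommGroup T] [Module R T], Module.IsTorsion R T →
      Subsingleton (extGroup R 1 B T)) :
    ∀ (N : Type u) [AddCommGroup N] [Module R N], Subsingleton (extGroup R 2 B N) := by
  intro N _ _
  classical
  -- embed `N` in an injective module `E`
  let Nc := ModuleCat.of R N
  let E := CategoryTheory.Injective.under Nc
  let ι : N →ₗ[R] E := (CategoryTheory.Injective.ι Nc : Nc ⟶ E).hom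
  have hι : Function.Injective ι :=
    (ModuleCat.mono_iff_injective (CategoryTheory.Injective.ι Nc)).1 inferInstance
  haveI hEinj : Module.Injective R E :=
    Module.injective_module_of_injective_object R E (inj := by
      show CategoryTheory.Injective E; infer_instance)
  -- the "reg-injective closure" of N inside E
  let D : Submodule R E :=
  { carrier := {x | ∃ r ∈ nonZeroDivisors R, r • x ∈ LinearMap.range ι}
    add_mem' := by
      rintro a b ⟨r, hr, hra⟩ ⟨s, hs, hsb⟩
      refine ⟨r * s, mul_mem hr hs, ?_⟩
      rw [smul_add]
      refine add_mem ?_ ?_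
      · rw [mul_comm, mul_smul]; exact Submodule.smul_mem _ s hra
      · rw [mul_smul]; exact Submodule.smul_mem _ r hsb
    zero_mem' := ⟨1, one_mem _, by rw [smul_zero]; exact Submodule.zero_mem _⟩
    smul_mem' := by
      rintro c a ⟨r, hr, h⟩
      exact ⟨r, hr, by rw [smul_comm]; exact Submodule.smul_mem _ c h⟩ }
  have hmemD : ∀ x : E, x ∈ D ↔ ∃ r ∈ nonZeroDivisors R, r • x ∈ LinearMap.range ι :=
    fun x => Iff.rfl
  let ιD : N →ₗ[R] ↥D := ι.codRestrict D
    (fun n => ⟨1, one_mem _, by rw [one_smul]; exact ⟨n, rfl⟩⟩)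
  have hιD : Function.Injective ιD := fun a b h => hι (congrArg Subtype.val h)
  -- D satisfies Baer's criterion for regular ideals
  have hbaer : ∀ I : Ideal R, (∃ r ∈ I, r ∈ nonZeroDivisors R) →
      ∀ f : I →ₗ[R] ↥D, ∃ g : R →ₗ[R] ↥D, ∀ (x : R) (hx : x ∈ I), g x = f ⟨x, hx⟩ := by
    rintro I ⟨r, hrI, hrreg⟩ f
    have hBaerE : Module.Baer R E := Module.Baer.of_injective hEinj
    obtain ⟨g', hg'⟩ := hBaerE I (D.subtype ∘ₗ f)
    have h1 : g' r = ((f ⟨r, hrI⟩ : ↥D) : E) := hg' r hrI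
    obtain ⟨s, hs, hsmem⟩ := (f ⟨r, hrI⟩).2
    have hsc : ∀ x : R, g' x = x • g' 1 := fun x => by
      conv_lhs => rw [show x = x • (1 : R) by rw [smul_eq_mul, mul_one]]
      rw [g'.map_smul]
    have he : g' 1 ∈ D := by
      refine ⟨s * r, mul_mem hs hrreg, ?_⟩
      have h2 : (s * r) • g' 1 = s • ((f ⟨r, hrI⟩ : ↥D) : E) := by
        rw [mul_smul, ← hsc r, h1]
      rw [h2]
      exact hsmem
    refine ⟨g'.codRestrict D (fun x => by rw [hsc x]; exact D.smul_mem x he), fun x hx => ?_⟩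
    exact Subtype.ext (hg' x hx)
  -- D is injective
  have hDinj : Module.Injective R ↥D :=
    hreg ↥D (fun I hI => ext_subsingleton_one_of_baer I (hbaer I hI))
  -- the quotient is torsion
  let T := (↥D) ⧸ LinearMap.range ιD
  have hT : Module.IsTorsion R T := by
    intro x
    obtain ⟨m, rfl⟩ := Submodule.Quotient.mk_surjective _ x
    obtain ⟨r, hr, n, hn⟩ := m.2
    refine ⟨⟨r, hr⟩, ?_⟩
    have hrm : r • m = ιD n := Subtype.ext (by
      show r • (m : E) = ι n
      exact hn.symm)
    show r • Submodule.Quotient.mk m = (0 : T)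
    rw [← Submodule.Quotient.mk_smul, hrm]
    exact (Submodule.Quotient.mk_eq_zero _).2 ⟨n, rfl⟩
  -- the main diagram chase
  let P : ProjectiveResolution (ModuleCat.of R B) := ProjectiveResolution.of _
  rw [show (2 : ℕ) = 1 + 1 from rfl, ext_subsingleton_iff P 1]
  intro f hf
  -- step 1 : extend ιD ∘ f along d 2 1 using injectivity of D
  have hstep1 : ∀ x, (P.complex.d 2 1) x = 0 →
      (ιD ∘ₗ (f.hom : P.complex.X 2 →ₗ[R] N)) x = 0 := by
    intro x hx
    obtain ⟨y, hy⟩ := (ShortComplex.moduleCat_exact_iff _).1 (P.exact_succ 1) x hx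
    have h3 : f ((P.complex.d 3 2) y) = 0 := LinearMap.congr_fun (congrArg ModuleCat.Hom.hom hf) y
    rw [hy] at h3
    show ιD (f x) = 0
    rw [h3, map_zero]
  obtain ⟨g, hg⟩ := factor_extend (R := R)
    (P.complex.d 2 1).hom
    (ιD ∘ₗ (f.hom : P.complex.X 2 →ₗ[R] N)) hstep1 hDinj
  -- step 2 : push to the torsion quotient and use `hB`
  let π : ↥D →ₗ[R] T := (LinearMap.range ιD).mkQ
  have h21 : P.complex.d 2 1 ≫ (ModuleCat.ofHom (π ∘ₗ g) : P.complex.X 1 ⟶ ModuleCat.of R T)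
      = 0 := by
    apply ModuleCat.hom_ext
    apply LinearMap.ext
    intro x
    show π (g ((P.complex.d 2 1) x)) = 0
    rw [hg x]
    exact (Submodule.Quotient.mk_eq_zero _).2 ⟨f x, rfl⟩
  obtain ⟨h, hh⟩ := (ext_subsingleton_iff P 0).1 (hB T hT) (ModuleCat.ofHom (π ∘ₗ g)) h21
  -- step 3 : lift h through π using projectivity of P₀
  let πc : ModuleCat.of R ↥D ⟶ ModuleCat.of R T := ModuleCat.ofHom π
  haveI : CategoryTheory.Epi πc :=
    (ModuleCat.epi_iff_surjective _).2 (Submodule.mkQ_surjective _)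
  let h' : P.complex.X 0 ⟶ ModuleCat.of R ↥D := CategoryTheory.Projective.factorThru h πc
  have hh' : h' ≫ πc = h := CategoryTheory.Projective.factorThru_comp h πc
  -- step 4 : correct g so that it lands in N
  let h'' : P.complex.X 0 →ₗ[R] ↥D := h'.hom
  let g' : P.complex.X 1 →ₗ[R] ↥D :=
    g - (h'' ∘ₗ (P.complex.d 1 0).hom)
  have hg'mem : ∀ y, g' y ∈ LinearMap.range ιD := by
    intro y
    have e2 : π (h'' ((P.complex.d 1 0) y)) = h ((P.complex.d 1 0) y) :=
      LinearMap.congr_fun (congrArg ModuleCat.Hom.hom hh') ((P.complex.d 1 0) y)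
    have e3 : h ((P.complex.d 1 0) y) = π (g y) := LinearMap.congr_fun (congrArg ModuleCat.Hom.hom hh) y
    have e4 : π (g' y) = 0 := by
      show π (g y - h'' ((P.complex.d 1 0) y)) = 0
      rw [map_sub, e2, e3, sub_self]
    have := (Submodule.Quotient.mk_eq_zero (LinearMap.range ιD)).1 e4
    exact this
  let g'' : P.complex.X 1 →ₗ[R] N :=
    (LinearEquiv.ofInjective ιD hιD).symm.toLinearMap ∘ₗ
      (g'.codRestrict (LinearMap.range ιD) hg'mem)
  have hcod : ∀ y, ιD (g'' y) = g' y := by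
    intro y
    rw [← LinearEquiv.ofInjective_apply ιD (h := hιD) (g'' y)]
    exact congrArg Subtype.val
      ((LinearEquiv.ofInjective ιD hιD).apply_symm_apply ⟨g' y, hg'mem y⟩)
  refine ⟨(ModuleCat.ofHom g'' : P.complex.X 1 ⟶ ModuleCat.of R N), ?_⟩
  apply ModuleCat.hom_ext
  apply LinearMap.ext
  intro x
  show g'' ((P.complex.d 2 1) x) = f x
  apply hιD
  rw [hcod]
  show g ((P.complex.d 2 1) x) - h'' ((P.complex.d 1 0) ((P.complex.d 2 1) x)) = ιD (f x)
  have hdd : (P.complex.d 1 0) ((P.complex.d 2 1) x) = 0 :=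
    LinearMap.congr_fun (congrArg ModuleCat.Hom.hom (P.complex.d_comp_d 2 1 0)) x
  rw [hdd, map_zero, sub_zero, hg x]
  rfl
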